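/- With the combinatorial setup below, the map ((i,j), s) ↦ (π^s(i), π^s(j)), defined on the set of triples with (i,j) ∈ J₋,₁ and 0 ≤ s ≤ ν(i,j), is injective. Consequently the π-level η and the extended π-order ν are well defined on J₊,₁ ∪ J₀,₀ ∪ J₋,₁, the cardinality of J₀,₀ equals Σ_{(i,j)∈J₋,₁} (ν(i,j) − 1), and J₊,₁ has the same cardinality as J₋,₁. -/

import Mathlib

namespace PaperPurity

variable {r : ℕ}

/-- `J₊ = {(i,j) : j ≤ c < i}` (translated to 0-based indexing on `Fin r`). -/
def Jp (c : ℕ) : Set (Fin r × Fin r) := {q | q.2.val < c ∧ c ≤ q.1.val}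

/-- `J₀ = {(i,j) : i,j ≤ c or i,j > c}` (0-based). -/
def Jz (c : ℕ) : Set (Fin r × Fin r) :=
  {q | (q.1.val < c ∧ q.2.val < c) ∨ (c ≤ q.1.val ∧ c ≤ q.2.val)}

/-- `J₋ = {(i,j) : i ≤ c < j}` (0-based). -/
def Jm (c : ℕ) : Set (Fin r × Fin r) := {q | q.1.val < c ∧ c ≤ q.2.val}

/-- Apply `π^s` to both entries of a pair. -/
def iter (π : Equiv.Perm (Fin r)) (s : ℕ) (q : Fin r × Fin r) : Fin r × Fin r :=
  ((π ^ s) q.1, (π ^ s) q.2)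

/-- The π-order `ν(i,j)`: the smallest positive `ν` with `(π^ν i, π^ν j) ∈ J₊ ∪ J₋`.
On `J₀,₀` this `sInf` also computes the extended π-order `ν(i,j) - s`. -/
noncomputable def nu (π : Equiv.Perm (Fin r)) (c : ℕ) (q : Fin r × Fin r) : ℕ :=
  sInf {ν : ℕ | 0 < ν ∧ iter π ν q ∈ Jp c ∪ Jm c}

/-- `J₋,₁`. -/
def Jm1 (π : Equiv.Perm (Fin r)) (c : ℕ) : Set (Fin r × Fin r) :=
  {q | q ∈ Jm c ∧ iter π (nu π c q) q ∈ Jp c}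

/-- `J₊,₁`. -/
def Jp1 (π : Equiv.Perm (Fin r)) (c : ℕ) : Set (Fin r × Fin r) :=
  {q' | ∃ q ∈ Jm1 π c, q' = iter π (nu π c q) q}

/-- `J₊,₂ = J₊ \ J₊,₁`. -/
def Jp2 (π : Equiv.Perm (Fin r)) (c : ℕ) : Set (Fin r × Fin r) := Jp c \ Jp1 π c

/-- `J₀,₀`. -/
def Jz0 (π : Equiv.Perm (Fin r)) (c : ℕ) : Set (Fin r × Fin r) :=
  {q' | ∃ q ∈ Jm1 π c, ∃ s : ℕ, 1 ≤ s ∧ s ≤ nu π c q - 1 ∧ q' = iter π s q}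

/-- The π-level `η`. -/
noncomputable def eta (π : Equiv.Perm (Fin r)) (c : ℕ) (q' : Fin r × Fin r) : ℕ :=
  sInf {s : ℕ | ∃ q ∈ Jm1 π c, s ≤ nu π c q ∧ q' = iter π s q}

/-- Membership in `Γ` for the tuple `(γ 1, …, γ s)`. -/
def inGamma (π : Equiv.Perm (Fin r)) (c s : ℕ) (γ : ℕ → Fin r) : Prop :=
  2 ≤ s ∧ (∀ ℓ : ℕ, 1 ≤ ℓ → ℓ ≤ s - 2 → (γ ℓ, γ (ℓ + 1)) ∈ Jz0 π c) ∧
    (γ (s - 1), γ s) ∈ Jp2 π c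

/-- Membership in `Δ` for the tuple `(γ 1, …, γ s)`. -/
def inDelta (π : Equiv.Perm (Fin r)) (c s : ℕ) (γ : ℕ → Fin r) : Prop :=
  3 ≤ s ∧ inGamma π c (s - 1) γ ∧ (γ (s - 1), γ s) ∈ Jz0 π c

/-- `n_t(γ)`. -/
noncomputable def nCount (π : Equiv.Perm (Fin r)) (c s : ℕ) (γ : ℕ → Fin r) (t : ℕ) : ℕ :=
  Set.ncard {ℓ : ℕ | 1 ≤ ℓ ∧ ℓ ≤ s - 1 ∧ (γ ℓ, γ (ℓ + 1)) ∈ Jz0 π c ∧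
    nu π c (γ ℓ, γ (ℓ + 1)) = t}

/-- `κ(γ) = Σ_{t ≥ 1} n_t(γ) p^{-t} ∈ ℚ`. -/
noncomputable def kappa (p : ℕ) (π : Equiv.Perm (Fin r)) (c s : ℕ) (γ : ℕ → Fin r) : ℚ :=
  ∑ᶠ t : ℕ, if 1 ≤ t then (nCount π c s γ t : ℚ) / (p : ℚ) ^ t else 0

/-- Membership in `Γ₁`. -/
def inGamma1 (π : Equiv.Perm (Fin r)) (c s : ℕ) (γ : ℕ → Fin r) : Prop :=
  inGamma π c s γ ∧ (γ 1, γ s) ∈ Jp1 π c ∧ (γ 2, γ s) ∉ Jp1 π c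

/-- Membership in `Δ₁`. -/
def inDelta1 (π : Equiv.Perm (Fin r)) (c s : ℕ) (γ : ℕ → Fin r) : Prop :=
  inDelta π c s γ ∧ (γ 1, γ s) ∈ Jp1 π c ∧ (γ 2, γ s) ∉ Jp1 π c

/-- `κ(π) = max {κ(γ) : γ ∈ Γ₁ ∪ Δ₁}` (and `0` if `Γ₁ ∪ Δ₁ = ∅`); realized as a
supremum in `ℝ` of the (finite) set of values together with `0`. -/
noncomputable def kappaPerm (p : ℕ) (π : Equiv.Perm (Fin r)) (c : ℕ) : ℝ :=
  sSup (insert (0 : ℝ) {x : ℝ | ∃ (s : ℕ) (γ : ℕ → Fin r),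
    (inGamma1 π c s γ ∨ inDelta1 π c s γ) ∧ x = ((kappa p π c s γ : ℚ) : ℝ)})

/-- The `k`-span of the matrix units `E_{i,j}`, `(i,j) ∈ S`. -/
def spanUnits (k : Type*) [Field k] {r : ℕ} (S : Set (Fin r × Fin r)) :
    Submodule k (Matrix (Fin r) (Fin r) k) :=
  Submodule.span k ((fun q : Fin r × Fin r => Matrix.single q.1 q.2 (1 : k)) '' S)


lemma nu_pos' {c : ℕ} {π : Equiv.Perm (Fin r)} {q : Fin r × Fin r}
    (h : q ∈ Jm1 π c) : 0 < nu π c q := by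
  rcases Nat.eq_zero_or_pos (nu π c q) with h' | h'
  swap
  · exact h'
  · exfalso
    have h2 := h.2
    rw [h', ] at h2
    simp only [iter, pow_zero, Equiv.Perm.coe_one, id_eq, Prod.mk.eta] at h2
    exact absurd h2.2 (not_le.2 h.1.1)

lemma nu_min' {c : ℕ} {π : Equiv.Perm (Fin r)} {q : Fin r × Fin r} {m : ℕ}
    (hm : 0 < m) (hlt : m < nu π c q) : iter π m q ∉ Jp c ∪ Jm c := by
  have := Nat.notMem_of_lt_sInf (show m < sInf {ν : ℕ | 0 < ν ∧ iter π ν q ∈ Jp c ∪ Jm c}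
    from hlt)
  intro hmem
  exact this ⟨hm, hmem⟩

lemma iter_add {π : Equiv.Perm (Fin r)} (a b : ℕ) (q : Fin r × Fin r) :
    iter π a (iter π b q) = iter π (a + b) q := by
  simp [iter, pow_add, Equiv.Perm.mul_apply]

lemma inj_aux {c : ℕ} {π : Equiv.Perm (Fin r)} {q₁ q₂ : Fin r × Fin r}
    (h₁ : q₁ ∈ Jm1 π c) (h₂ : q₂ ∈ Jm1 π c) {s₁ s₂ : ℕ}
    (hs₁ : s₁ ≤ nu π c q₁) (hle : s₂ ≤ s₁)
    (heq : iter π s₁ q₁ = iter π s₂ q₂) : q₁ = q₂ ∧ s₁ = s₂ := by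
  have hiter : iter π (s₁ - s₂) q₁ = q₂ := by
    have h1 : iter π s₂ (iter π (s₁ - s₂) q₁) = iter π s₂ q₂ := by
      rw [iter_add, Nat.add_sub_cancel' hle, heq]
    have hinj : Function.Injective (iter π s₂ : Fin r × Fin r → Fin r × Fin r) := by
      intro a b hab
      simp only [iter, Prod.mk.injEq] at hab
      exact Prod.ext ((π ^ s₂).injective hab.1) ((π ^ s₂).injective hab.2)
    exact hinj h1
  rcases Nat.lt_or_ge s₂ s₁ with hlt | hge
  · exfalso
    have hmpos : 0 < s₁ - s₂ := Nat.sub_pos_of_lt hlt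
    have hmle : s₁ - s₂ ≤ nu π c q₁ := le_trans (Nat.sub_le _ _) hs₁
    rcases lt_or_eq_of_le hmle with hlt' | heq'
    · exact nu_min' hmpos hlt' (hiter ▸ Or.inr h₂.1)
    · have := h₁.2
      rw [← heq', hiter] at this
      exact absurd this.2 (not_le.2 h₂.1.1)
  · have hseq : s₁ = s₂ := le_antisymm hge hle
    subst hseq
    simp only [Nat.sub_self] at hiter
    have : iter π 0 q₁ = q₁ := by simp [iter]
    rw [this] at hiter
    exact ⟨hiter, rfl⟩

lemma inj_main {c : ℕ} {π : Equiv.Perm (Fin r)} :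
    ∀ q₁ ∈ Jm1 π c, ∀ q₂ ∈ Jm1 π c, ∀ s₁ s₂ : ℕ, s₁ ≤ nu π c q₁ → s₂ ≤ nu π c q₂ →
      iter π s₁ q₁ = iter π s₂ q₂ → q₁ = q₂ ∧ s₁ = s₂ := by
  intro q₁ h₁ q₂ h₂ s₁ s₂ hs₁ hs₂ heq
  rcases le_total s₂ s₁ with hle | hle
  · exact inj_aux h₁ h₂ hs₁ hle heq
  · obtain ⟨h, h'⟩ := inj_aux h₂ h₁ hs₂ hle heq.symm
    exact ⟨h.symm, h'.symm⟩

theorem statement_12 (c d : ℕ) (hc : 0 < c) (hd : 0 < d)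
    (π : Equiv.Perm (Fin (c + d))) :
    (∀ q₁ ∈ Jm1 π c, ∀ q₂ ∈ Jm1 π c, ∀ s₁ s₂ : ℕ, s₁ ≤ nu π c q₁ → s₂ ≤ nu π c q₂ →
        iter π s₁ q₁ = iter π s₂ q₂ → q₁ = q₂ ∧ s₁ = s₂) ∧
      (Jz0 π c).ncard = ∑ᶠ q ∈ Jm1 π c, (nu π c q - 1) ∧
      (Jp1 π c).ncard = (Jm1 π c).ncard := by
  classical
  refine ⟨fun q₁ h₁ q₂ h₂ s₁ s₂ hs₁ hs₂ heq => inj_main q₁ h₁ q₂ h₂ s₁ s₂ hs₁ hs₂ heq, ?_, ?_⟩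
  · -- Jz0 cardinality
    set F := (Set.toFinite (Jm1 π c)).toFinset with hF
    have hFcoe : (↑F : Set (Fin (c + d) × Fin (c + d))) = Jm1 π c :=
      (Set.toFinite _).coe_toFinset
    have hFmem : ∀ q, q ∈ F ↔ q ∈ Jm1 π c := fun q => (Set.toFinite _).mem_toFinset
    have hJz0 : Jz0 π c =
        ↑(F.biUnion (fun q => (Finset.Icc 1 (nu π c q - 1)).image (fun s => iter π s q))) := by
      ext q'
      simp only [Jz0, Set.mem_setOf_eq, Finset.coe_biUnion, Set.mem_iUnion,
        Finset.mem_coe, Finset.mem_image, Finset.mem_Icc, hFmem]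
      constructor
      · rintro ⟨q, hq, s, hs1, hs2, rfl⟩
        exact ⟨q, hq, s, ⟨hs1, hs2⟩, rfl⟩
      · rintro ⟨q, hq, s, ⟨hs1, hs2⟩, rfl⟩
        exact ⟨q, hq, s, hs1, hs2, rfl⟩
    rw [hJz0, Set.ncard_coe_finset]
    have hdisj : ∀ q₁ ∈ F, ∀ q₂ ∈ F, q₁ ≠ q₂ →
        Disjoint ((Finset.Icc 1 (nu π c q₁ - 1)).image (fun s => iter π s q₁))
          ((Finset.Icc 1 (nu π c q₂ - 1)).image (fun s => iter π s q₂)) := by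
      intro q₁ hq₁ q₂ hq₂ hne
      rw [Finset.disjoint_left]
      rintro x hx₁ hx₂
      simp only [Finset.mem_image, Finset.mem_Icc] at hx₁ hx₂
      obtain ⟨s₁, ⟨_, hs₁⟩, hx₁⟩ := hx₁
      obtain ⟨s₂, ⟨_, hs₂⟩, hx₂⟩ := hx₂
      exact hne (inj_main q₁ ((hFmem q₁).1 hq₁) q₂ ((hFmem q₂).1 hq₂) s₁ s₂
        (le_trans hs₁ (Nat.sub_le _ _)) (le_trans hs₂ (Nat.sub_le _ _))
        (hx₁.trans hx₂.symm)).1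
    rw [Finset.card_biUnion hdisj]
    have hcard : ∀ q ∈ F,
        ((Finset.Icc 1 (nu π c q - 1)).image (fun s => iter π s q)).card = nu π c q - 1 := by
      intro q hq
      rw [Finset.card_image_of_injOn, Nat.card_Icc]
      · omega
      · intro s₁ hs₁ s₂ hs₂ h
        simp only [Finset.coe_Icc, Set.mem_Icc] at hs₁ hs₂
        exact (inj_main q ((hFmem q).1 hq) q ((hFmem q).1 hq) s₁ s₂
          (le_trans hs₁.2 (Nat.sub_le _ _)) (le_trans hs₂.2 (Nat.sub_le _ _)) h).2
    rw [Finset.sum_congr rfl hcard, ← finsum_mem_coe_finset, hFcoe]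
  · -- Jp1 cardinality
    have himg : Jp1 π c = (fun q => iter π (nu π c q) q) '' Jm1 π c := by
      ext q'
      simp only [Jp1, Set.mem_setOf_eq, Set.mem_image]
      constructor
      · rintro ⟨q, hq, rfl⟩; exact ⟨q, hq, rfl⟩
      · rintro ⟨q, hq, rfl⟩; exact ⟨q, hq, rfl⟩
    rw [himg]
    apply Set.ncard_image_of_injOn
    intro q₁ h₁ q₂ h₂ h
    exact (inj_main q₁ h₁ q₂ h₂ _ _ le_rfl le_rfl h).1

end PaperPurity
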